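/- arXiv:2208.07125 — 4 statements merged into one kernel-verified Lean document; each statement's English description precedes it below -/
import Mathlib

section
/- Let A, B and C be (possibly non-unital) rings and let f : A → B and g : B → C be ring homomorphisms. If the composite g∘f is a near isomorphism and f is surjective, then both f and g are near isomorphisms. -/
/-- A *near isomorphism* is a surjective homomorphism `f : A → B` of (possibly non-unital)
rings such that `A·ker(f) = ker(f)·A = 0`, i.e. `a * k = 0` and `k * a = 0` for every
`a ∈ A` and every `k ∈ ker f`. -/
def IsNearIso {A B : Type*} [NonUnitalRing A] [NonUnitalRing B] (f : A →ₙ+* B) : Prop :=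
  Function.Surjective f ∧ ∀ a k : A, f k = 0 → a * k = 0 ∧ k * a = 0

namespace IsNearIso

variable {A B C : Type*} [NonUnitalRing A] [NonUnitalRing B] [NonUnitalRing C]
  {f : A →ₙ+* B} {g : B →ₙ+* C}

theorem of_comp_inner (hgf : IsNearIso (g.comp f)) (hf : Function.Surjective f) :
    IsNearIso f :=
  ⟨hf, fun a k hk => hgf.2 a k (by simp [hk])⟩

theorem of_comp_outer (hgf : IsNearIso (g.comp f)) (hf : Function.Surjective f) :
    IsNearIso g := by
  refine ⟨.of_comp hgf.1, fun b k hk => ?_⟩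
  obtain ⟨a, rfl⟩ := hf b
  obtain ⟨k, rfl⟩ := hf k
  obtain ⟨hak, hka⟩ := hgf.2 a k hk
  exact ⟨by rw [← map_mul, hak, map_zero], by rw [← map_mul, hka, map_zero]⟩

end IsNearIso

/-- If `g ∘ f` is a near isomorphism and `f` is surjective then both `f` and `g` are
near isomorphisms. -/
theorem isNearIso_of_comp_isNearIso
    {A B C : Type*} [NonUnitalRing A] [NonUnitalRing B] [NonUnitalRing C]
    (f : A →ₙ+* B) (g : B →ₙ+* C)
    (hgf : IsNearIso (g.comp f)) (hf : Function.Surjective f) :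
    IsNearIso f ∧ IsNearIso g :=
  ⟨hgf.of_comp_inner hf, hgf.of_comp_outer hf⟩
end

section
/- Let A and B be (possibly non-unital) rings and let f : A → B be a near isomorphism. Then f induces a bijection from the set of idempotents of A onto the set of idempotents of B; that is, f maps idempotents to idempotents, f is injective on idempotents, and every idempotent of B is the image under f of an idempotent of A. -/
/-! The kernel of a near isomorphism squares to zero and annihilates `A`, so two idempotents
with the same image differ by an element `k` that is killed by everything; expanding
`(e + k) ^ 2 = e + k` then forces `k = 0`. For surjectivity, if `f x = b` is idempotent then
`x * x - x` lies in the kernel, so `x ^ 3 = x ^ 2` and `x * x` is an idempotent lift of `b`. -/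

theorem IsIdempotentElem.eq_zero_of_add {R : Type*} [NonUnitalRing R] {e k : R}
    (he : IsIdempotentElem e) (hek : IsIdempotentElem (e + k))
    (h₁ : e * k = 0) (h₂ : k * e = 0) (h₃ : k * k = 0) : k = 0 := by
  have : e + k = e := by
    calc e + k = (e + k) * (e + k) := hek.symm
      _ = e * e + e * k + (k * e + k * k) := by rw [add_mul, mul_add, mul_add]
      _ = e := by rw [he.eq, h₁, h₂, h₃, add_zero, add_zero, add_zero]
  exact add_eq_left.mp this

theorem IsIdempotentElem.mul_self_of_mul_mul_self {M : Type*} [Semigroup M] {x : M}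
    (hx : x * (x * x) = x * x) : IsIdempotentElem (x * x) := by
  calc x * x * (x * x) = x * (x * (x * x)) := mul_assoc _ _ _
    _ = x * x := by rw [hx, hx]

namespace IsNearIso

variable {A B : Type*} [NonUnitalRing A] [NonUnitalRing B] {f : A →ₙ+* B}

theorem eq_of_isIdempotentElem_of_map_eq (hf : IsNearIso f) {a a' : A}
    (ha : IsIdempotentElem a) (ha' : IsIdempotentElem a') (h : f a = f a') : a = a' := by
  have hk : f (a - a') = 0 := by rw [map_sub, h, sub_self]
  exact sub_eq_zero.mp <| ha'.eq_zero_of_add (k := a - a') (by rwa [add_sub_cancel])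
    (hf.2 a' _ hk).1 (hf.2 a' _ hk).2 (hf.2 _ _ hk).1

theorem exists_isIdempotentElem_map_eq (hf : IsNearIso f) {b : B} (hb : IsIdempotentElem b) :
    ∃ a : A, IsIdempotentElem a ∧ f a = b := by
  obtain ⟨x, rfl⟩ := hf.1 b
  have hk : f (x * x - x) = 0 := by rw [map_sub, map_mul, hb.eq, sub_self]
  have hx : x * (x * x) = x * x := by
    simpa only [mul_sub, sub_eq_zero] using (hf.2 x _ hk).1
  exact ⟨x * x, .mul_self_of_mul_mul_self hx, by rw [map_mul, hb.eq]⟩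

end IsNearIso

/-- A near isomorphism induces a bijection between the sets of idempotents: it maps
idempotents to idempotents, is injective on idempotents, and every idempotent of the
target is the image of an idempotent of the source. -/
theorem isNearIso_bijOn_idempotents
    {A B : Type*} [NonUnitalRing A] [NonUnitalRing B]
    (f : A →ₙ+* B) (hf : IsNearIso f) :
    (∀ a : A, IsIdempotentElem a → IsIdempotentElem (f a)) ∧
      (∀ a a' : A, IsIdempotentElem a → IsIdempotentElem a' → f a = f a' → a = a') ∧
      (∀ b : B, IsIdempotentElem b → ∃ a : A, IsIdempotentElem a ∧ f a = b) :=
  ⟨fun _ ha => ha.map f, fun _ _ => hf.eq_of_isIdempotentElem_of_map_eq,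
    fun _ => hf.exists_isIdempotentElem_map_eq⟩
end

section
/- Let A and B be (possibly non-unital) rings, let f : A → B be a near isomorphism and let x ∈ A be a local idempotent. Then f(x) is a local idempotent of B. -/
/-- `x` is a unit of the corner ring `eAe` (whose identity element is `e`):
there is `y ∈ eAe` with `x * y = y * x = e`. -/
def IsCornerUnit {A : Type*} [NonUnitalRing A] (e x : A) : Prop :=
  ∃ y : A, e * y * e = y ∧ x * y = e ∧ y * x = e

/-- An idempotent `e` of a (possibly non-unital) ring `A` is a *local idempotent* if the
corner ring `eAe` (a unital ring with identity `e`) is a local ring, i.e. it is nonzero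
and every element of `eAe` is a unit or its difference from the identity `e` is a unit. -/
def IsLocalIdempotent {A : Type*} [NonUnitalRing A] (e : A) : Prop :=
  IsIdempotentElem e ∧ e ≠ 0 ∧
    ∀ x : A, e * x * e = x → (IsCornerUnit e x ∨ IsCornerUnit e (e - x))

/-! A near isomorphism `f` restricts to a surjection of unital rings `eAe → f(e)Bf(e)`, and
`f(e) ≠ 0` because otherwise `e = e·e ∈ A·ker f = 0`. A nonzero surjective image of a local ring
is local. -/

section CornerRing

variable {A B : Type*} [NonUnitalRing A] [NonUnitalRing B]

theorem IsCornerUnit.map (f : A →ₙ+* B) {e u : A} (h : IsCornerUnit e u) :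
    IsCornerUnit (f e) (f u) := by
  obtain ⟨y, hy, huy, hyu⟩ := h
  exact ⟨f y, by rw [← map_mul, ← map_mul, hy], by rw [← map_mul, huy], by rw [← map_mul, hyu]⟩

theorem IsIdempotentElem.mul_mul_mul_self {e : A} (he : IsIdempotentElem e) (a : A) :
    e * (e * a * e) * e = e * a * e := by
  have : e * (e * a * e) * e = (e * e) * a * (e * e) := by noncomm_ring
  rw [this, he.eq]

theorem exists_corner_preimage (f : A →ₙ+* B) (hf : Function.Surjective f) {e : A}
    (he : IsIdempotentElem e) {b : B}
    (hb : f e * b * f e = b) : ∃ a : A, e * a * e = a ∧ f a = b := by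
  obtain ⟨a, rfl⟩ := hf b
  exact ⟨e * a * e, he.mul_mul_mul_self a, by rw [map_mul, map_mul, hb]⟩

theorem IsNearIso.map_ne_zero_of_isIdempotentElem {f : A →ₙ+* B} (hf : IsNearIso f) {e : A}
    (he : IsIdempotentElem e) (he0 : e ≠ 0) : f e ≠ 0 :=
  fun h ↦ he0 (he.eq ▸ (hf.2 e e h).1)

end CornerRing

/-- A near isomorphism sends local idempotents to local idempotents. -/
theorem isLocalIdempotent_image_of_isNearIso
    {A B : Type*} [NonUnitalRing A] [NonUnitalRing B]
    (f : A →ₙ+* B) (hf : IsNearIso f)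
    (x : A) (hx : IsLocalIdempotent x) :
    IsLocalIdempotent (f x) := by
  obtain ⟨hidem, hne, hloc⟩ := hx
  refine ⟨hidem.map f, hf.map_ne_zero_of_isIdempotentElem hidem hne, fun b hb ↦ ?_⟩
  obtain ⟨a, ha, rfl⟩ := exists_corner_preimage f hf.1 hidem hb
  rcases hloc a ha with h | h
  · exact .inl (h.map f)
  · exact .inr (map_sub f x a ▸ h.map f)
end

section
/- Let R be a commutative ring, let A and B be unital R-algebras, let C and J be two-sided ideals of A, let K be a two-sided ideal of B, and let I be an additive subgroup of C satisfying C·I ⊆ I and I·C ⊆ I. Let f : C → B and g : B → C + J be R-linear maps. Assume: (1) (C ∩ J)·C ⊆ I, C·(C ∩ J) ⊆ I, and I ⊆ C ∩ J; (2) g(K) ⊆ J; (3) f(I) ⊆ K; (4) f is surjective onto B; (5) g sends idempotents of B to idempotents of A; (6) f(x·y) − f(x)·f(y) ∈ K for all x, y ∈ C, and g(v·w) − g(v)·g(w) ∈ J for all v, w ∈ B; (7) g(f(x)) − x ∈ J for all x ∈ C. Let b ∈ B be a local idempotent with b ∉ K, and suppose g(b) = a₀ + a₁ + ⋯ + aₙ,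 where a₀, …, aₙ are pairwise orthogonal local idempotents of A. Then there exists exactly one index j ∈ {0, …, n} such that aⱼ ∉ J; moreover, for this index j one has aⱼ ∈ C (so aⱼ ∈ C \ (C ∩ J)), g(b) − aⱼ ∈ J, and f(aⱼ) − b ∈ K. -/
universe u

theorem exists_surjective_ringHom_map_eq_zero_iff {A : Type u} [Ring A] {σ : Type*} [SetLike σ A]
    [AddSubgroupClass σ A] (J : σ) (hJ : ∀ a x : A, x ∈ J → a * x ∈ J ∧ x * a ∈ J) :
    ∃ (S : Type u) (_ : Ring S) (π : A →+* S), Function.Surjective π ∧ ∀ x, π x = 0 ↔ x ∈ J := by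
  let J' : TwoSidedIdeal A := .mk' J (zero_mem J) add_mem neg_mem
    (fun hy => (hJ _ _ hy).1) (fun hx => (hJ _ _ hx).2)
  exact ⟨_, inferInstance, J'.ringCon.mk', J'.ringCon.mk'_surjective, fun x => by
    rw [← TwoSidedIdeal.mem_ker, TwoSidedIdeal.ker_ringCon_mk', TwoSidedIdeal.mem_mk']; rfl⟩

namespace IsLocalIdempotent

variable {A : Type*}

theorem map [NonUnitalRing A] {S F : Type*} [NonUnitalRing S] [FunLike F A S]
    [NonUnitalRingHomClass F A S] {e : A} (he : IsLocalIdempotent e) (π : F)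
    (hπ : Function.Surjective π) (hπe : π e ≠ 0) : IsLocalIdempotent (π e) := by
  obtain ⟨he_idem, -, he_loc⟩ := he
  refine ⟨he_idem.map π, hπe, fun y hy => ?_⟩
  obtain ⟨x, rfl⟩ := hπ y
  have hcorner : e * (e * x * e) * e = e * x * e := by
    simp only [mul_assoc, he_idem.eq, he_idem.mul_self_mul]
  have hmap : π (e * x * e) = π x := by rw [map_mul, map_mul, hy]
  rcases he_loc _ hcorner with ⟨z, hz, hxz, hzx⟩ | ⟨z, hz, hxz, hzx⟩
  · exact .inl ⟨π z, by rw [← map_mul, ← map_mul, hz], by rw [← hmap, ← map_mul, hxz],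
      by rw [← hmap, ← map_mul, hzx]⟩
  · exact .inr ⟨π z, by rw [← map_mul, ← map_mul, hz], by rw [← hmap, ← map_sub, ← map_mul, hxz],
      by rw [← hmap, ← map_sub, ← map_mul, hzx]⟩

theorem eq_zero_or_eq [NonUnitalRing A] {e p : A} (he : IsLocalIdempotent e)
    (hp : IsIdempotentElem p) (hep : e * p = p) (hpe : p * e = p) : p = 0 ∨ p = e := by
  have hcorner : e * p * e = p := by rw [hep, hpe]
  rcases he.2.2 p hcorner with ⟨y, -, hpy, -⟩ | ⟨z, -, -, hz⟩
  · right
    calc p = p * e := hpe.symm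
      _ = p * p * y := by rw [← hpy, mul_assoc]
      _ = e := by rw [hp.eq, hpy]
  · left
    calc p = e * p := hep.symm
      _ = z * ((e - p) * p) := by rw [← mul_assoc, hz]
      _ = 0 := by rw [sub_mul, hep, hp.eq, sub_self, mul_zero]

theorem exists_eq_of_eq_sum [Ring A] {ι : Type*} [Fintype ι] {e : A} (he : IsLocalIdempotent e)
    {p : ι → A} (hp : OrthogonalIdempotents p) (hsum : e = ∑ i, p i) :
    ∃ j, p j = e ∧ ∀ k, k ≠ j → p k = 0 := by
  classical
  have hdich : ∀ i, p i = 0 ∨ p i = e := fun i =>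
    he.eq_zero_or_eq (hp.idem i) (by simp [hsum, Finset.sum_mul, hp.mul_eq])
      (by rw [hsum, hp.mul_sum_of_mem (Finset.mem_univ i)])
  obtain ⟨j, hj⟩ : ∃ j, p j ≠ 0 := by
    by_contra! h
    exact he.2.1 (by rw [hsum]; exact Finset.sum_eq_zero fun i _ => h i)
  refine ⟨j, (hdich j).resolve_left hj, fun k hkj => (hdich k).resolve_right fun hk => he.2.1 ?_⟩
  calc e = e * e := he.1.eq.symm
    _ = p k * p j := by rw [hk, (hdich j).resolve_left hj]
    _ = 0 := hp.ortho hkj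

theorem mem_of_mem_corner_of_map_eq [Ring A] {S : Type*} [Ring S] {σ : Type*} [SetLike σ A]
    {C : σ} (hC : ∀ a x : A, x ∈ C → a * x ∈ C ∧ x * a ∈ C) (π : A →+* S) {e q : A}
    (he : IsLocalIdempotent e) (hq : q ∈ C) (hcorner : e * q * e = q) (hπ : π e = π q)
    (hπe : π e ≠ 0) : e ∈ C := by
  rcases he.2.2 q hcorner with ⟨y, -, -, hyq⟩ | ⟨y, -, -, hy⟩
  · exact hyq ▸ (hC y q hq).1
  · refine absurd ?_ hπe
    rw [← hy, map_mul, map_sub, hπ, sub_self, mul_zero]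

end IsLocalIdempotent

section CornerLift

variable {A S : Type*} [Ring A] [Ring S] {σ : Type*} [SetLike σ A] {C : σ} {π : A →+* S}
  {ι : Type*}

/-- Squared so as to be idempotent modulo `I`, and not merely modulo `C ∩ ker π`. -/
def cornerLift (a : ι → A) (x : A) (i : ι) : A := a i * x * a i * (a i * x * a i)

variable {a : ι → A} {x : A}

theorem mul_mul_mem (hC : ∀ a x : A, x ∈ C → a * x ∈ C ∧ x * a ∈ C) (hx : x ∈ C) (e : A) :
    e * x * e ∈ C :=
  (hC _ _ (hC _ _ hx).1).2

theorem cornerLift_mem (hC : ∀ a x : A, x ∈ C → a * x ∈ C ∧ x * a ∈ C) (hx : x ∈ C) (i : ι) :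
    cornerLift a x i ∈ C :=
  (hC _ _ (mul_mul_mem hC hx (a i))).1

theorem mul_cornerLift_mul {i : ι} (hi : IsIdempotentElem (a i)) :
    a i * cornerLift a x i * a i = cornerLift a x i := by
  simp only [cornerLift, mul_assoc, hi.eq, hi.mul_self_mul]

theorem map_mul_mul_eq [Fintype ι] (ha : OrthogonalIdempotents a) (hx : π x = π (∑ i, a i))
    (i : ι) : π (a i * x * a i) = π (a i) := by
  rw [map_mul, map_mul, hx, ← map_mul, ← map_mul, ha.mul_sum_of_mem (Finset.mem_univ i),
    (ha.idem i).eq]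

theorem map_cornerLift [Fintype ι] (ha : OrthogonalIdempotents a) (hx : π x = π (∑ i, a i))
    (i : ι) : π (cornerLift a x i) = π (a i) := by
  rw [cornerLift, map_mul, map_mul_mul_eq ha hx, ← map_mul, (ha.idem i).eq]

variable [AddSubgroupClass σ A] {I : AddSubgroup A}

theorem mul_sub_mul_mem_of_map_eq
    (hI : ∀ x c : A, x ∈ C → π x = 0 → c ∈ C → x * c ∈ I ∧ c * x ∈ I)
    {u u' v v' : A} (hu : u ∈ C) (hu' : u' ∈ C) (hv : v ∈ C) (hv' : v' ∈ C)
    (huu' : π u = π u') (hvv' : π v = π v') : u * v - u' * v' ∈ I := by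
  rw [show u * v - u' * v' = u * (v - v') + (u - u') * v' by noncomm_ring]
  exact add_mem (hI _ u (sub_mem hv hv') (by rw [map_sub, hvv', sub_self]) hu).2
    (hI _ v' (sub_mem hu hu') (by rw [map_sub, huu', sub_self]) hv').1

theorem cornerLift_mem_of_map_eq_zero
    (hI : ∀ x c : A, x ∈ C → π x = 0 → c ∈ C → x * c ∈ I ∧ c * x ∈ I)
    (hC : ∀ a x : A, x ∈ C → a * x ∈ C ∧ x * a ∈ C) (hxC : x ∈ C) [Fintype ι]
    (ha : OrthogonalIdempotents a) (hx : π x = π (∑ i, a i)) {i : ι} (hai : π (a i) = 0) :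
    cornerLift a x i ∈ I := by
  have hπ : π (a i * x * a i) = π 0 := by rw [map_mul_mul_eq ha hx, hai, map_zero]
  have h := mul_sub_mul_mem_of_map_eq hI (mul_mul_mem hC hxC (a i)) (zero_mem C)
    (mul_mul_mem hC hxC (a i)) (zero_mem C) hπ hπ
  rwa [mul_zero, sub_zero] at h

theorem sub_cornerLift_mem
    (hI : ∀ x c : A, x ∈ C → π x = 0 → c ∈ C → x * c ∈ I ∧ c * x ∈ I)
    (hC : ∀ a x : A, x ∈ C → a * x ∈ C ∧ x * a ∈ C) (hxC : x ∈ C) [Fintype ι]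
    (ha : OrthogonalIdempotents a) (hx : π x = π (∑ i, a i)) {i : ι} (haC : a i ∈ C) :
    a i - cornerLift a x i ∈ I := by
  have hπ : π (a i) = π (a i * x * a i) := (map_mul_mul_eq ha hx i).symm
  have h := mul_sub_mul_mem_of_map_eq hI haC (mul_mul_mem hC hxC (a i)) haC
    (mul_mul_mem hC hxC (a i)) hπ hπ
  rwa [(ha.idem i).eq] at h

theorem cornerLift_mul_self_sub_mem
    (hI : ∀ x c : A, x ∈ C → π x = 0 → c ∈ C → x * c ∈ I ∧ c * x ∈ I)
    (hC : ∀ a x : A, x ∈ C → a * x ∈ C ∧ x * a ∈ C) (hxC : x ∈ C) [Fintype ι]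
    (ha : OrthogonalIdempotents a) (hx : π x = π (∑ i, a i)) (i : ι) :
    cornerLift a x i * cornerLift a x i - cornerLift a x i ∈ I := by
  have hπ : π (cornerLift a x i) = π (a i * x * a i) := by
    rw [map_cornerLift ha hx, map_mul_mul_eq ha hx]
  exact mul_sub_mul_mem_of_map_eq hI (cornerLift_mem hC hxC i) (mul_mul_mem hC hxC (a i))
    (cornerLift_mem hC hxC i) (mul_mul_mem hC hxC (a i)) hπ hπ

theorem cornerLift_mul_mem_of_ne
    (hI : ∀ x c : A, x ∈ C → π x = 0 → c ∈ C → x * c ∈ I ∧ c * x ∈ I)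
    (hC : ∀ a x : A, x ∈ C → a * x ∈ C ∧ x * a ∈ C) (hxC : x ∈ C) [Fintype ι]
    (ha : OrthogonalIdempotents a) (hx : π x = π (∑ i, a i)) {i k : ι} (hik : i ≠ k) :
    cornerLift a x i * cornerLift a x k ∈ I := by
  have hπ : π (a i * x * a i * (a k * x * a k) * (a k * x * a k)) = π 0 := by
    rw [map_mul, map_mul, map_mul_mul_eq ha hx i, map_mul_mul_eq ha hx k, ← map_mul, ha.ortho hik,
      map_zero, zero_mul]
  have h := mul_sub_mul_mem_of_map_eq hI (mul_mul_mem hC hxC (a i)) (mul_mul_mem hC hxC (a i))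
    (hC _ _ (hC _ _ (mul_mul_mem hC hxC (a k))).1).2 (zero_mem C) rfl hπ
  rw [mul_zero, sub_zero] at h
  simpa only [cornerLift, mul_assoc] using h

theorem mul_self_sub_sum_cornerLift_mem
    (hI : ∀ x c : A, x ∈ C → π x = 0 → c ∈ C → x * c ∈ I ∧ c * x ∈ I)
    (hC : ∀ a x : A, x ∈ C → a * x ∈ C ∧ x * a ∈ C) (hxC : x ∈ C) [Fintype ι]
    (ha : OrthogonalIdempotents a) (hx : π x = π (∑ i, a i)) :
    x * x - (∑ i, cornerLift a x i) * (∑ i, cornerLift a x i) ∈ I := by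
  have hπ : π x = π (∑ i, cornerLift a x i) := by
    simp only [hx, map_sum, map_cornerLift ha hx]
  have hT : ∑ i, cornerLift a x i ∈ C := sum_mem fun i _ => cornerLift_mem hC hxC i
  exact mul_sub_mul_mem_of_map_eq hI hxC hT hxC hT hπ hπ

end CornerLift

section Descent

variable {A S T : Type*} [Ring A] [Ring S] [Ring T] {σ : Type*} [SetLike σ A]
  [AddSubgroupClass σ A] {C : σ} {I : AddSubgroup A} {π : A →+* S} {ι : Type*} [Fintype ι]
  {a : ι → A} {x : A}

theorem map_eq_of_sub_mem {φ : C →+ T} (hφ : ∀ u : C, (u : A) ∈ I → φ u = 0) {u v : C}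
    (h : (u : A) - v ∈ I) : φ u = φ v := by
  rw [← sub_eq_zero, ← map_sub]
  exact hφ _ (by rwa [AddSubgroupClass.coe_sub])

theorem orthogonalIdempotents_map_cornerLift
    (hI : ∀ x c : A, x ∈ C → π x = 0 → c ∈ C → x * c ∈ I ∧ c * x ∈ I)
    (hC : ∀ a x : A, x ∈ C → a * x ∈ C ∧ x * a ∈ C) (hxC : x ∈ C)
    (ha : OrthogonalIdempotents a) (hx : π x = π (∑ i, a i)) (φ : C →+ T)
    (hφmul : ∀ u v : C, φ ⟨u * v, (hC u v v.2).1⟩ = φ u * φ v)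
    (hφ : ∀ u : C, (u : A) ∈ I → φ u = 0) :
    OrthogonalIdempotents fun i => φ ⟨cornerLift a x i, cornerLift_mem hC hxC i⟩ where
  idem i := by
    rw [IsIdempotentElem, ← hφmul]
    exact map_eq_of_sub_mem hφ (cornerLift_mul_self_sub_mem hI hC hxC ha hx i)
  ortho i k hik := by
    dsimp only
    rw [← hφmul]
    exact hφ _ (cornerLift_mul_mem_of_ne hI hC hxC ha hx hik)

theorem map_mul_self_eq_sum_map_cornerLift
    (hI : ∀ x c : A, x ∈ C → π x = 0 → c ∈ C → x * c ∈ I ∧ c * x ∈ I)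
    (hC : ∀ a x : A, x ∈ C → a * x ∈ C ∧ x * a ∈ C) (hxC : x ∈ C)
    (ha : OrthogonalIdempotents a) (hx : π x = π (∑ i, a i)) (φ : C →+ T)
    (hφmul : ∀ u v : C, φ ⟨u * v, (hC u v v.2).1⟩ = φ u * φ v)
    (hφ : ∀ u : C, (u : A) ∈ I → φ u = 0) :
    φ ⟨x, hxC⟩ * φ ⟨x, hxC⟩ = ∑ i, φ ⟨cornerLift a x i, cornerLift_mem hC hxC i⟩ := by
  let L : C := ∑ i, ⟨cornerLift a x i, cornerLift_mem hC hxC i⟩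
  have hL : (L : A) = ∑ i, cornerLift a x i := by simp [L]
  calc φ ⟨x, hxC⟩ * φ ⟨x, hxC⟩ = φ ⟨x * x, _⟩ := (hφmul _ _).symm
    _ = φ ⟨L * L, _⟩ := map_eq_of_sub_mem hφ (by
        show x * x - (L : A) * L ∈ I
        rw [hL]
        exact mul_self_sub_sum_cornerLift_mem hI hC hxC ha hx)
    _ = φ L * φ L := hφmul L L
    _ = ∑ i, φ ⟨cornerLift a x i, cornerLift_mem hC hxC i⟩ := by
        rw [map_sum]
        exact (orthogonalIdempotents_map_cornerLift hI hC hxC ha hx φ hφmul hφ).isIdempotentElem_sum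

theorem exists_map_cornerLift_eq
    (hI : ∀ x c : A, x ∈ C → π x = 0 → c ∈ C → x * c ∈ I ∧ c * x ∈ I)
    (hC : ∀ a x : A, x ∈ C → a * x ∈ C ∧ x * a ∈ C) (hxC : x ∈ C)
    (ha : OrthogonalIdempotents a) (hx : π x = π (∑ i, a i)) (φ : C →+ T)
    (hφmul : ∀ u v : C, φ ⟨u * v, (hC u v v.2).1⟩ = φ u * φ v)
    (hφ : ∀ u : C, (u : A) ∈ I → φ u = 0) (hφπ : ∀ u : C, φ u = 0 → π u = 0)
    (hloc : IsLocalIdempotent (φ ⟨x, hxC⟩)) :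
    ∃ j, φ ⟨cornerLift a x j, cornerLift_mem hC hxC j⟩ = φ ⟨x, hxC⟩ ∧
      ∀ i, π (a i) ≠ 0 ↔ i = j := by
  obtain ⟨j, hj, hk⟩ := hloc.exists_eq_of_eq_sum
    (orthogonalIdempotents_map_cornerLift hI hC hxC ha hx φ hφmul hφ)
    (hloc.1.eq.symm.trans (map_mul_self_eq_sum_map_cornerLift hI hC hxC ha hx φ hφmul hφ))
  refine ⟨j, hj, fun i => ⟨fun hi => by_contra fun hij => hi ?_, ?_⟩⟩
  · rw [← map_cornerLift ha hx i]
    exact hφπ _ (hk i hij)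
  · rintro rfl hi
    exact hloc.2.1 (hj ▸ hφ _ (cornerLift_mem_of_map_eq_zero hI hC hxC ha hx hi))

end Descent

theorem green_correspondence_for_idempotents_general
    {R A B : Type*} [CommRing R] [Ring A] [Ring B] [Algebra R A] [Algebra R B]
    (C J : Submodule R A) (K : Submodule R B)
    -- `C`, `J` and `K` are two-sided ideals
    (hC : ∀ a x : A, x ∈ C → a * x ∈ C ∧ x * a ∈ C)
    (hJ : ∀ a x : A, x ∈ J → a * x ∈ J ∧ x * a ∈ J)
    (hK : ∀ b x : B, x ∈ K → b * x ∈ K ∧ x * b ∈ K)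
    -- `I` is an additive subgroup of `C` with `C·I ⊆ I` and `I·C ⊆ I`
    (I : AddSubgroup A)
    -- the `R`-linear maps
    (f : C →ₗ[R] B) (g : B →ₗ[R] ↥(C ⊔ J))
    -- (1) `(C ∩ J)·C ⊆ I`, `C·(C ∩ J) ⊆ I` and `I ⊆ C ∩ J`
    (h1a : ∀ x c : A, x ∈ C → x ∈ J → c ∈ C → x * c ∈ I ∧ c * x ∈ I)
    -- (2) `g(K) ⊆ J`
    (h2 : ∀ b : B, b ∈ K → (↑(g b) : A) ∈ J)
    -- (3) `f(I) ⊆ K`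
    (h3 : ∀ x : C, (x : A) ∈ I → f x ∈ K)
    -- (4) `f` is surjective onto `B`
    (h4 : Function.Surjective f)
    -- (6) `f` and `g` commute with multiplication modulo `K` and `J` respectively
    (h6f : ∀ x y : C, f ⟨(x : A) * (y : A), (hC (x : A) (y : A) y.2).1⟩ - f x * f y ∈ K)
    -- (7) `g ∘ f` is the identity modulo `J`
    (h7 : ∀ x : C, (↑(g (f x)) : A) - (x : A) ∈ J)
    -- `b` is a local idempotent of `B` not lying in `K`
    (b : B) (hb : IsLocalIdempotent b) (hbK : b ∉ K)
    -- `g b = a₀ + ⋯ + aₙ` with the `aᵢ` pairwise orthogonal local idempotents of `A`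
    (n : ℕ) (a : Fin (n + 1) → A)
    (ha : ∀ i, IsLocalIdempotent (a i))
    (horth : ∀ i j, i ≠ j → a i * a j = 0)
    (hsum : (↑(g b) : A) = ∑ i, a i) :
    (∃! j : Fin (n + 1), a j ∉ J) ∧
      ∀ j : Fin (n + 1), a j ∉ J →
        a j ∈ C ∧ (↑(g b) : A) - a j ∈ J ∧ ∃ hjC : a j ∈ C, f ⟨a j, hjC⟩ - b ∈ K := by
  obtain ⟨SJ, _, πJ, -, hπJ⟩ := exists_surjective_ringHom_map_eq_zero_iff J hJ
  obtain ⟨SK, _, πK, hπK_surj, hπK⟩ := exists_surjective_ringHom_map_eq_zero_iff K hK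
  obtain ⟨x, rfl⟩ := h4 b
  have hx : πJ x = πJ (∑ i, a i) := by
    rw [← hsum, eq_comm, ← sub_eq_zero, ← map_sub, hπJ]
    exact h7 x
  have hI : ∀ x c : A, x ∈ C → πJ x = 0 → c ∈ C → x * c ∈ I ∧ c * x ∈ I :=
    fun y c hy hyJ => h1a y c hy ((hπJ y).1 hyJ)
  have ha' : OrthogonalIdempotents a := ⟨fun i => (ha i).1, horth⟩
  let φ : C →+ SK := (πK : B →+ SK).comp f
  have hφmul : ∀ u v : C, φ ⟨u * v, (hC u v v.2).1⟩ = φ u * φ v := fun u v => by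
    rw [← sub_eq_zero]
    simpa [φ] using (hπK _).2 (h6f u v)
  have hφ : ∀ u : C, (u : A) ∈ I → φ u = 0 := fun u hu => (hπK _).2 (h3 u hu)
  have hφπ : ∀ u : C, φ u = 0 → πJ u = 0 := fun u hu =>
    (hπJ _).2 (by simpa using J.sub_mem (h2 _ ((hπK _).1 hu)) (h7 u))
  obtain ⟨j, hj, hiff⟩ := exists_map_cornerLift_eq hI hC x.2 ha' hx φ hφmul hφ hφπ
    (hb.map πK hπK_surj fun h => hbK ((hπK _).1 h))
  simp only [ne_eq, hπJ] at hiff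
  have hajC : a j ∈ C := (ha j).mem_of_mem_corner_of_map_eq hC πJ (cornerLift_mem hC x.2 j)
    (mul_cornerLift_mul (ha j).1) (map_cornerLift ha' hx j).symm
    (fun h => (hiff j).2 rfl ((hπJ _).1 h))
  refine ⟨⟨j, (hiff j).2 rfl, fun i hi => (hiff i).1 hi⟩, fun i hi => ?_⟩
  obtain rfl := (hiff i).1 hi
  refine ⟨hajC, ?_, hajC, ?_⟩
  · rw [hsum, ← Finset.sum_erase_eq_sub (Finset.mem_univ i)]
    exact sum_mem fun k hk => not_not.1 fun hkJ => Finset.ne_of_mem_erase hk ((hiff k).1 hkJ)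
  · rw [← hπK, map_sub, sub_eq_zero]
    exact (map_eq_of_sub_mem hφ (sub_cornerLift_mem hI hC x.2 ha' hx hajC)).trans hj

/-- Proposition: the abstract Green correspondence for idempotents.  `A` and `B` are
unital `R`-algebras, `C` and `J` are two-sided ideals of `A` (in particular
`R`-submodules), `K` is a two-sided ideal of `B`, `I` is an additive subgroup of `C`
with `C·I ⊆ I` and `I·C ⊆ I`, and `f : C → B`, `g : B → C + J` are `R`-linear maps
satisfying conditions (1)-(7).  If `b ∈ B` is a local idempotent with `b ∉ K` and
`g b = a₀ + ⋯ + aₙ` with the `aᵢ` pairwise orthogonal local idempotents of `A`, then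
there is exactly one index `j` with `aⱼ ∉ J`; for it `aⱼ ∈ C` (hence
`aⱼ ∈ C \ (C ∩ J)`), `g b − aⱼ ∈ J` and `f aⱼ − b ∈ K`. -/
theorem green_correspondence_for_idempotents
    {R A B : Type*} [CommRing R] [Ring A] [Ring B] [Algebra R A] [Algebra R B]
    (C J : Submodule R A) (K : Submodule R B)
    -- `C`, `J` and `K` are two-sided ideals
    (hC : ∀ a x : A, x ∈ C → a * x ∈ C ∧ x * a ∈ C)
    (hJ : ∀ a x : A, x ∈ J → a * x ∈ J ∧ x * a ∈ J)
    (hK : ∀ b x : B, x ∈ K → b * x ∈ K ∧ x * b ∈ K)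
    -- `I` is an additive subgroup of `C` with `C·I ⊆ I` and `I·C ⊆ I`
    (I : AddSubgroup A) (hIC : ∀ x ∈ I, x ∈ C)
    (hCI : ∀ c x : A, c ∈ C → x ∈ I → c * x ∈ I ∧ x * c ∈ I)
    -- the `R`-linear maps
    (f : C →ₗ[R] B) (g : B →ₗ[R] ↥(C ⊔ J))
    -- (1) `(C ∩ J)·C ⊆ I`, `C·(C ∩ J) ⊆ I` and `I ⊆ C ∩ J`
    (h1a : ∀ x c : A, x ∈ C → x ∈ J → c ∈ C → x * c ∈ I ∧ c * x ∈ I)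
    (h1b : ∀ x ∈ I, x ∈ J)
    -- (2) `g(K) ⊆ J`
    (h2 : ∀ b : B, b ∈ K → (↑(g b) : A) ∈ J)
    -- (3) `f(I) ⊆ K`
    (h3 : ∀ x : C, (x : A) ∈ I → f x ∈ K)
    -- (4) `f` is surjective onto `B`
    (h4 : Function.Surjective f)
    -- (5) `g` sends idempotents to idempotents
    (h5 : ∀ b : B, IsIdempotentElem b → IsIdempotentElem (↑(g b) : A))
    -- (6) `f` and `g` commute with multiplication modulo `K` and `J` respectively
    (h6f : ∀ x y : C, f ⟨(x : A) * (y : A), (hC (x : A) (y : A) y.2).1⟩ - f x * f y ∈ K)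
    (h6g : ∀ v w : B, (↑(g (v * w)) : A) - (↑(g v) : A) * (↑(g w) : A) ∈ J)
    -- (7) `g ∘ f` is the identity modulo `J`
    (h7 : ∀ x : C, (↑(g (f x)) : A) - (x : A) ∈ J)
    -- `b` is a local idempotent of `B` not lying in `K`
    (b : B) (hb : IsLocalIdempotent b) (hbK : b ∉ K)
    -- `g b = a₀ + ⋯ + aₙ` with the `aᵢ` pairwise orthogonal local idempotents of `A`
    (n : ℕ) (a : Fin (n + 1) → A)
    (ha : ∀ i, IsLocalIdempotent (a i))
    (horth : ∀ i j, i ≠ j → a i * a j = 0)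
    (hsum : (↑(g b) : A) = ∑ i, a i) :
    (∃! j : Fin (n + 1), a j ∉ J) ∧
      ∀ j : Fin (n + 1), a j ∉ J →
        a j ∈ C ∧ (↑(g b) : A) - a j ∈ J ∧ ∃ hjC : a j ∈ C, f ⟨a j, hjC⟩ - b ∈ K :=
  green_correspondence_for_idempotents_general C J K hC hJ hK I f g h1a h2 h3 h4 h6f h7 b hb hbK n a
    ha horth hsum
end
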